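/- arXiv:1405.1640 — 6 statements merged into one kernel-verified Lean document; each statement's English description precedes it below -/
import Mathlib

section
/- For any two density operators ρ and σ on a finite-dimensional Hilbert space, F(ρ,σ)²/min{rank ρ, rank σ} ≤ Tr(ρσ) ≤ F(ρ,σ)², where F(ρ,σ) = Tr√(√ρ σ √ρ) is the fidelity. -/
open Matrix Kronecker BigOperators
open scoped ComplexOrder

/-- The positive semidefinite square root of a positive semidefinite matrix
(the definition `Matrix.PosSemidef.sqrt` of the older Mathlib, removed since). -/
noncomputable def Matrix.PosSemidef.sqrt {n 𝕜 : Type*} [Fintype n] [RCLike 𝕜] [DecidableEq n]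
    {A : Matrix n n 𝕜} (hA : A.PosSemidef) : Matrix n n 𝕜 :=
  hA.1.eigenvectorUnitary.1 * diagonal ((↑) ∘ (√·) ∘ hA.1.eigenvalues) *
    (star hA.1.eigenvectorUnitary : Matrix n n 𝕜)

/-- Trace norm (Schatten 1-norm): `Tr √(XᴴX)`. -/
noncomputable def traceNorm {m n : Type*} [Fintype m] [Fintype n] [DecidableEq n]
    (X : Matrix m n ℂ) : ℝ :=
  ((Matrix.posSemidef_conjTranspose_mul_self X).sqrt.trace).re

/-!
With `A = √ρ √σ` we have `Tr(ρσ) = Tr(AᴴA) = ∑ λᵢ` and `F(ρ,σ) = ‖A‖₁ = ∑ √λᵢ`, where `λᵢ ≥ 0`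
are the eigenvalues of `AᴴA`. Hence `Tr(ρσ) ≤ F²` because the square of a sum of nonnegative
numbers dominates the sum of their squares, and `F² ≤ rank A · Tr(ρσ)` by Cauchy–Schwarz over the
`rank A` nonzero eigenvalues; finally `rank A ≤ min (rank ρ) (rank σ)`.
-/

namespace Finset

variable {ι : Type*} (s : Finset ι) {f : ι → ℝ}

lemma sum_le_sq_sum_sqrt (hf : ∀ i ∈ s, 0 ≤ f i) : ∑ i ∈ s, f i ≤ (∑ i ∈ s, √(f i)) ^ 2 :=
  calc ∑ i ∈ s, f i = ∑ i ∈ s, √(f i) ^ 2 := sum_congr rfl fun i hi ↦ (Real.sq_sqrt (hf i hi)).symm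
    _ ≤ (∑ i ∈ s, √(f i)) ^ 2 := sum_sq_le_sq_sum_of_nonneg fun _ _ ↦ Real.sqrt_nonneg _

lemma sq_sum_sqrt_le_card_ne_zero_mul_sum (hf : ∀ i ∈ s, 0 ≤ f i) :
    (∑ i ∈ s, √(f i)) ^ 2 ≤ #{i ∈ s | f i ≠ 0} * ∑ i ∈ s, f i := by
  have hsqrt : ∑ i ∈ s with f i ≠ 0, √(f i) = ∑ i ∈ s, √(f i) :=
    sum_filter_of_ne fun _ _ h hfi ↦ by simp_all
  have hsq : ∑ i ∈ s with f i ≠ 0, √(f i) ^ 2 = ∑ i ∈ s, f i := by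
    rw [sum_filter_of_ne fun _ _ h hfi ↦ by simp_all]
    exact sum_congr rfl fun i hi ↦ Real.sq_sqrt (hf i hi)
  rw [← hsqrt, ← hsq]
  exact sq_sum_le_card_mul_sum_sq

end Finset

namespace Matrix.PosSemidef

variable {n 𝕜 : Type*} [Fintype n] [RCLike 𝕜] [DecidableEq n] {A : Matrix n n 𝕜}

lemma posSemidef_sqrt (hA : A.PosSemidef) : hA.sqrt.PosSemidef :=
  (posSemidef_diagonal_iff.mpr fun i ↦ by simp [Real.sqrt_nonneg]).mul_mul_conjTranspose_same
    (hA.1.eigenvectorUnitary : Matrix n n 𝕜)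

lemma sqrt_mul_self (hA : A.PosSemidef) : hA.sqrt * hA.sqrt = A := by
  conv_rhs => rw [hA.1.spectral_theorem, Unitary.conjStarAlgAut_apply]
  simp only [sqrt, Matrix.mul_assoc]
  rw [← Matrix.mul_assoc (star hA.1.eigenvectorUnitary : Matrix n n 𝕜),
    Unitary.coe_star_mul_self, Matrix.one_mul, ← Matrix.mul_assoc (diagonal _),
    diagonal_mul_diagonal]
  congr 3
  funext i
  simp only [Function.comp_apply, ← RCLike.ofReal_mul, Real.mul_self_sqrt (hA.eigenvalues_nonneg i)]

lemma trace_sqrt (hA : A.PosSemidef) : hA.sqrt.trace = ∑ i, (√(hA.1.eigenvalues i) : 𝕜) := by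
  rw [sqrt, trace_mul_cycle, Unitary.coe_star_mul_self, Matrix.one_mul, trace_diagonal]
  rfl

lemma rank_sqrt (hA : A.PosSemidef) : hA.sqrt.rank = A.rank := by
  rw [← rank_conjTranspose_mul_self, hA.posSemidef_sqrt.1.eq, hA.sqrt_mul_self]

lemma trace_mul_eq_trace_conjTranspose_mul_self {B : Matrix n n 𝕜} (hA : A.PosSemidef)
    (hB : B.PosSemidef) :
    (A * B).trace = ((hA.sqrt * hB.sqrt)ᴴ * (hA.sqrt * hB.sqrt)).trace := by
  conv_lhs => rw [← hA.sqrt_mul_self, ← hB.sqrt_mul_self]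
  rw [conjTranspose_mul, hA.posSemidef_sqrt.1.eq, hB.posSemidef_sqrt.1.eq, trace_mul_comm]
  simp only [Matrix.mul_assoc]
  rw [trace_mul_comm hB.sqrt]
  simp only [Matrix.mul_assoc]

end Matrix.PosSemidef

section traceNorm

variable {m n : Type*} [Fintype m] [Fintype n] [DecidableEq n] (X : Matrix m n ℂ)

lemma traceNorm_eq_sum_sqrt_eigenvalues :
    traceNorm X = ∑ i, √((posSemidef_conjTranspose_mul_self X).1.eigenvalues i) := by
  simp [traceNorm, PosSemidef.trace_sqrt]

lemma re_trace_conjTranspose_mul_self_eq_sum_eigenvalues :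
    (Xᴴ * X).trace.re = ∑ i, (posSemidef_conjTranspose_mul_self X).1.eigenvalues i := by
  simp [(posSemidef_conjTranspose_mul_self X).1.trace_eq_sum_eigenvalues]

lemma re_trace_conjTranspose_mul_self_le_traceNorm_sq : (Xᴴ * X).trace.re ≤ traceNorm X ^ 2 := by
  rw [traceNorm_eq_sum_sqrt_eigenvalues, re_trace_conjTranspose_mul_self_eq_sum_eigenvalues]
  exact Finset.univ.sum_le_sq_sum_sqrt fun i _ ↦
    (posSemidef_conjTranspose_mul_self X).eigenvalues_nonneg i

open Finset in
lemma traceNorm_sq_le_rank_mul_re_trace_conjTranspose_mul_self :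
    traceNorm X ^ 2 ≤ X.rank * (Xᴴ * X).trace.re := by
  have hX := posSemidef_conjTranspose_mul_self X
  have hrank : X.rank = #{i | hX.1.eigenvalues i ≠ 0} := by
    rw [← rank_conjTranspose_mul_self, hX.1.rank_eq_card_non_zero_eigs, Fintype.card_subtype]
  rw [traceNorm_eq_sum_sqrt_eigenvalues, re_trace_conjTranspose_mul_self_eq_sum_eigenvalues, hrank]
  exact Finset.univ.sq_sum_sqrt_le_card_ne_zero_mul_sum fun i _ ↦ hX.eigenvalues_nonneg i

end traceNorm

theorem fidelity_sq_bounds_trace_mul_general {d : ℕ}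
    (ρ σ : Matrix (Fin d) (Fin d) ℂ)
    (hρ : ρ.PosSemidef) (hσ : σ.PosSemidef) :
    (traceNorm (hρ.sqrt * hσ.sqrt))^2 / (min ρ.rank σ.rank : ℝ) ≤ ((ρ * σ).trace).re ∧
    ((ρ * σ).trace).re ≤ (traceNorm (hρ.sqrt * hσ.sqrt))^2 := by
  set A := hρ.sqrt * hσ.sqrt
  have htrace : (ρ * σ).trace = (Aᴴ * A).trace := hρ.trace_mul_eq_trace_conjTranspose_mul_self hσ
  have hrank : A.rank ≤ min ρ.rank σ.rank :=
    le_min (hρ.rank_sqrt ▸ rank_mul_le_left _ _) (hσ.rank_sqrt ▸ rank_mul_le_right _ _)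
  have htrace_nonneg : 0 ≤ (ρ * σ).trace.re := by
    rw [htrace, re_trace_conjTranspose_mul_self_eq_sum_eigenvalues]
    exact Finset.sum_nonneg fun i _ ↦ (posSemidef_conjTranspose_mul_self A).eigenvalues_nonneg i
  refine ⟨div_le_of_le_mul₀ (by positivity) htrace_nonneg ?_,
    htrace ▸ re_trace_conjTranspose_mul_self_le_traceNorm_sq A⟩
  calc traceNorm A ^ 2 ≤ A.rank * (ρ * σ).trace.re :=
        htrace ▸ traceNorm_sq_le_rank_mul_re_trace_conjTranspose_mul_self A
    _ ≤ (ρ * σ).trace.re * min (ρ.rank : ℝ) σ.rank := by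
        rw [mul_comm]
        gcongr
        exact_mod_cast hrank

/-- for density operators `ρ, σ`,
`F(ρ,σ)² / min{rank ρ, rank σ} ≤ Tr(ρσ) ≤ F(ρ,σ)²`, where
`F(ρ,σ) = Tr √(√ρ σ √ρ) = ‖√ρ √σ‖₁` is the fidelity. -/
theorem fidelity_sq_bounds_trace_mul {d : ℕ}
    (ρ σ : Matrix (Fin d) (Fin d) ℂ)
    (hρ : ρ.PosSemidef) (hρt : ρ.trace = 1) (hσ : σ.PosSemidef) (hσt : σ.trace = 1) :
    (traceNorm (hρ.sqrt * hσ.sqrt))^2 / (min ρ.rank σ.rank : ℝ) ≤ ((ρ * σ).trace).re ∧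
    ((ρ * σ).trace).re ≤ (traceNorm (hρ.sqrt * hσ.sqrt))^2 :=
  fidelity_sq_bounds_trace_mul_general ρ σ hρ hσ
end

section
/- Let {pᵢ}ᵢ₌₁ⁿ be a probability distribution with at least two nonzero entries. Then there exists a unique c > 0 such that Σᵢ pᵢ/(c + pᵢ) = 1; moreover the function c ↦ Σᵢ pᵢ/(c+pᵢ) is strictly decreasing on (0,∞). -/
open BigOperators

/-- for a probability distribution with at least two nonzero entries, there
is a unique `c > 0` with `Σᵢ pᵢ/(c + pᵢ) = 1`, and `c ↦ Σᵢ pᵢ/(c+pᵢ)` is strictly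
decreasing on `(0,∞)`. -/
theorem existsUnique_c_and_strictAnti {n : ℕ} (p : Fin n → ℝ)
    (hp0 : ∀ i, 0 ≤ p i) (hp1 : ∑ i, p i = 1)
    (h2 : ∃ i j : Fin n, i ≠ j ∧ 0 < p i ∧ 0 < p j) :
    (∃! c : ℝ, 0 < c ∧ ∑ i, p i / (c + p i) = 1) ∧
    StrictAntiOn (fun c : ℝ => ∑ i, p i / (c + p i)) (Set.Ioi 0) := by
  obtain ⟨i, j, hij, hpi, hpj⟩ := h2
  set f : ℝ → ℝ := fun c => ∑ k, p k / (c + p k) with hf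
  have hanti : StrictAntiOn f (Set.Ioi 0) := by
    intro a ha b hb hab
    have ha0 : (0:ℝ) < a := ha
    apply Finset.sum_lt_sum
    · intro k _
      rcases eq_or_lt_of_le (hp0 k) with h | h
      · simp [← h]
      · exact div_le_div_of_nonneg_left h.le (by linarith) (by linarith)
    · exact ⟨i, Finset.mem_univ i, div_lt_div_of_pos_left hpi (by linarith) (by linarith)⟩
  refine ⟨?_, hanti⟩
  set m := min (p i) (p j) with hm
  have hm0 : 0 < m := lt_min hpi hpj
  have hsumij : p i + p j ≤ 1 := by
    rw [← hp1, ← Finset.sum_pair hij]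
    exact Finset.sum_le_sum_of_subset_of_nonneg (Finset.subset_univ _)
      (fun k _ _ => hp0 k)
  have hmhalf : m ≤ 1/2 := by
    have h1 : m ≤ p i := min_le_left _ _
    have h2 : m ≤ p j := min_le_right _ _
    linarith
  -- f 2 ≤ 1/2
  have hf2 : f 2 ≤ 1/2 := by
    have h : f 2 ≤ ∑ k, p k / 2 := by
      apply Finset.sum_le_sum
      intro k _
      exact div_le_div_of_nonneg_left (hp0 k) (by norm_num) (by linarith [hp0 k])
    calc f 2 ≤ ∑ k, p k / 2 := h
      _ = 1/2 := by rw [← Finset.sum_div, hp1]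
  -- f (m/2) ≥ 4/3
  have hfm : 4/3 ≤ f (m/2) := by
    have hterm : ∀ k : Fin n, m ≤ p k → 2/3 ≤ p k / (m/2 + p k) := by
      intro k hk
      rw [le_div_iff₀ (by nlinarith)]
      nlinarith
    have hpair : (4:ℝ)/3 ≤ ∑ k ∈ ({i, j} : Finset (Fin n)), p k / (m/2 + p k) := by
      rw [Finset.sum_pair hij]
      have := hterm i (min_le_left _ _)
      have := hterm j (min_le_right _ _)
      linarith
    refine hpair.trans (Finset.sum_le_sum_of_subset_of_nonneg (Finset.subset_univ _) ?_)
    intro k _ _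
    have := hp0 k
    positivity
  have hcont : ContinuousOn f (Set.Icc (m/2) 2) := by
    apply continuousOn_finset_sum
    intro k _
    apply ContinuousOn.div continuousOn_const (by fun_prop)
    intro x hx
    have h1 := hx.1
    have := hp0 k
    intro h
    nlinarith
  have hab : m/2 ≤ 2 := by linarith
  obtain ⟨c, hcmem, hfc⟩ := intermediate_value_Icc' hab hcont
    (Set.mem_Icc.mpr ⟨by linarith, by linarith⟩ : (1:ℝ) ∈ Set.Icc (f 2) (f (m/2)))
  have hc0 : (0:ℝ) < c := by linarith [hcmem.1]
  refine ⟨c, ⟨hc0, hfc⟩, ?_⟩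
  rintro c' ⟨hc'0, hfc'⟩
  exact hanti.injOn (Set.mem_Ioi.mpr hc'0) (Set.mem_Ioi.mpr hc0) (hfc'.trans hfc.symm)
end

section
/- The function c({pᵢ}), defined on probability vectors as the unique c ≥ 0 satisfying Σᵢ pᵢ/(c + pᵢ) = 1, is Schur-concave: if {p'ᵢ} is obtained from {pᵢ} by a doubly stochastic matrix, then c({p'ᵢ}) ≥ c({pᵢ}). -/
/-!
For `c > 0` the map `x ↦ x / (c + x) = 1 - c / (c + x)` is concave on `[0, ∞)`. Jensen's inequality
along each row of the doubly stochastic matrix `B`, summed using the column sums, gives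
`1 = ∑ pᵢ / (c + pᵢ) ≤ ∑ p'ᵢ / (c + p'ᵢ)`. Since `∑ p'ᵢ / (t + p'ᵢ)` is strictly decreasing in
`t ≥ 0`, a root `c' < c` would make the sum at `c'` exceed `1`.
-/

open Matrix Set

theorem concaveOn_div_add_self {𝕜 : Type*} [Field 𝕜] [LinearOrder 𝕜] [IsStrictOrderedRing 𝕜]
    {c : 𝕜} (hc : 0 ≤ c) : ConcaveOn 𝕜 (Ioi (-c)) fun x => x / (c + x) := by
  have hconv := ((convexOn_zpow (-1 : ℤ)).translate_right c).smul hc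
  have hdom : (fun z => c + z) ⁻¹' Ioi 0 = Ioi (-c) := by
    ext x
    simp [neg_lt_iff_pos_add']
  rw [hdom] at hconv
  refine (hconv.neg.add_const 1).congr fun x hx => ?_
  have hx : c + x ≠ 0 := (neg_lt_iff_pos_add'.1 hx).ne'
  simp only [Pi.add_apply, Pi.neg_apply, Function.comp_apply, smul_eq_mul, _root_.zpow_neg_one]
  field_simp
  ring

theorem ConcaveOn.sum_le_sum_map_mulVec {𝕜 β n : Type*} [Field 𝕜] [LinearOrder 𝕜]
    [IsStrictOrderedRing 𝕜] [AddCommGroup β] [PartialOrder β] [IsOrderedAddMonoid β]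
    [Module 𝕜 β] [IsStrictOrderedModule 𝕜 β] [Fintype n] [DecidableEq n]
    {s : Set 𝕜} {f : 𝕜 → β} (hf : ConcaveOn 𝕜 s f) {M : Matrix n n 𝕜}
    (hM : M ∈ doublyStochastic 𝕜 n) {x : n → 𝕜} (hx : ∀ i, x i ∈ s) :
    ∑ i, f (x i) ≤ ∑ i, f ((M *ᵥ x) i) := by
  have hjensen (i : n) : ∑ j, M i j • f (x j) ≤ f ((M *ᵥ x) i) := by
    simpa [mulVec, dotProduct] using hf.le_map_sum (t := Finset.univ) (w := M i)
      (fun j _ => nonneg_of_mem_doublyStochastic hM)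
      (sum_row_of_mem_doublyStochastic hM i) (fun j _ => hx j)
  calc ∑ j, f (x j) = ∑ j, (∑ i, M i j) • f (x j) := by
        simp only [sum_col_of_mem_doublyStochastic hM, one_smul]
    _ = ∑ i, ∑ j, M i j • f (x j) := by
        simp only [Finset.sum_smul]
        exact Finset.sum_comm
    _ ≤ ∑ i, f ((M *ᵥ x) i) := Finset.sum_le_sum fun i _ => hjensen i

section DivAdd

variable {𝕜 : Type*} [Field 𝕜] [LinearOrder 𝕜] [IsStrictOrderedRing 𝕜]

theorem div_add_le_div_add {a b c : 𝕜} (ha : 0 ≤ a) (hb : 0 ≤ b) (hbc : b ≤ c) :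
    a / (c + a) ≤ a / (b + a) := by
  rcases ha.eq_or_lt with rfl | ha
  · simp
  · exact div_le_div_of_nonneg_left ha.le (by positivity) (by linarith)

theorem div_add_lt_div_add {a b c : 𝕜} (ha : 0 < a) (hb : 0 ≤ b) (hbc : b < c) :
    a / (c + a) < a / (b + a) :=
  div_lt_div_of_pos_left ha (by positivity) (by linarith)

theorem sum_div_add_lt_sum_div_add {ι : Type*} [Fintype ι] {q : ι → 𝕜} (hq : ∀ i, 0 ≤ q i)
    (hq' : ∃ i, q i ≠ 0) {b c : 𝕜} (hb : 0 ≤ b) (hbc : b < c) :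
    ∑ i, q i / (c + q i) < ∑ i, q i / (b + q i) := by
  obtain ⟨i, hi⟩ := hq'
  exact Finset.sum_lt_sum (fun j _ => div_add_le_div_add (hq j) hb hbc.le)
    ⟨i, Finset.mem_univ i, div_add_lt_div_add ((hq i).lt_of_ne' hi) hb hbc⟩

end DivAdd

theorem schur_concave_c_general {n : ℕ} (p : Fin n → ℝ)
    (hp0 : ∀ i, 0 ≤ p i)
    (B : Matrix (Fin n) (Fin n) ℝ) (hB0 : ∀ i j, 0 ≤ B i j)
    (hBrow : ∀ i, ∑ j, B i j = 1) (hBcol : ∀ j, ∑ i, B i j = 1)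
    (c c' : ℝ) (hc'0 : 0 ≤ c')
    (hc : ∑ i, p i / (c + p i) = 1)
    (hc' : ∑ i, (B.mulVec p) i / (c' + (B.mulVec p) i) = 1) :
    c ≤ c' := by
  by_contra! hlt
  have hB : B ∈ doublyStochastic ℝ (Fin n) := mem_doublyStochastic_iff_sum.2 ⟨hB0, hBrow, hBcol⟩
  have hq0 : ∀ i, 0 ≤ (B *ᵥ p) i := nonneg_mulVec_of_mem_rowStochastic
    (mem_doublyStochastic_iff_mem_rowStochastic_and_mem_colStochastic.1 hB).1 hp0
  obtain ⟨i, -, hi⟩ := Finset.exists_ne_zero_of_sum_ne_zero (hc'.trans_ne one_ne_zero)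
  have hconcave : ConcaveOn ℝ (Ici 0) fun x => x / (c + x) :=
    (concaveOn_div_add_self (hc'0.trans hlt.le)).subset
      (Ici_subset_Ioi.2 (by linarith)) (convex_Ici 0)
  have hjensen : ∑ i, p i / (c + p i) ≤ ∑ i, (B *ᵥ p) i / (c + (B *ᵥ p) i) :=
    hconcave.sum_le_sum_map_mulVec hB hp0
  have hanti := sum_div_add_lt_sum_div_add hq0 ⟨i, left_ne_zero_of_mul hi⟩ hc'0 hlt
  linarith

/-- the function `c(p)`, the unique nonnegative solution of
`Σᵢ pᵢ/(c + pᵢ) = 1`, is Schur-concave: if `p' = B p` for a doubly stochastic `B`,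
then `c(p') ≥ c(p)`. -/
theorem schur_concave_c {n : ℕ} (p : Fin n → ℝ)
    (hp0 : ∀ i, 0 ≤ p i) (hp1 : ∑ i, p i = 1)
    (h2 : ∃ i j : Fin n, i ≠ j ∧ 0 < p i ∧ 0 < p j)
    (B : Matrix (Fin n) (Fin n) ℝ) (hB0 : ∀ i j, 0 ≤ B i j)
    (hBrow : ∀ i, ∑ j, B i j = 1) (hBcol : ∀ j, ∑ i, B i j = 1)
    (c c' : ℝ) (hc0 : 0 ≤ c) (hc'0 : 0 ≤ c')
    (hc : ∑ i, p i / (c + p i) = 1)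
    (hc' : ∑ i, (B.mulVec p) i / (c' + (B.mulVec p) i) = 1) :
    c ≤ c' :=
  schur_concave_c_general p hp0 B hB0 hBrow hBcol c c' hc'0 hc hc'
end

section
/- For |p⟩ = Σᵢ √pᵢ |i⟩ with {pᵢ} a probability distribution, the largest eigenvalue of the operator |p⟩⟨p| − Σᵢ pᵢ|i⟩⟨i| equals the unique nonnegative c satisfying Σᵢ pᵢ/(c + pᵢ) = 1 (where we take c = 0 when the distribution is deterministic). -/
/-!
Write `M = |q⟩⟨q| − diag p` with `qᵢ = √pᵢ`. An eigenvector `v` of `M` with eigenvalue `μ > 0`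
satisfies `(μ + pᵢ) vᵢ = qᵢ ⟨q, v⟩`, so `vᵢ = qᵢ ⟨q, v⟩ / (μ + pᵢ)`; pairing with `q` gives the
secular equation `Σᵢ pᵢ / (μ + pᵢ) = 1`. Its left side is strictly decreasing in `μ ≥ 0`, so no
eigenvalue exceeds `c`, while `wᵢ = √pᵢ / (c + pᵢ)` is an eigenvector with eigenvalue `c`.
-/

open Matrix

lemma Matrix.mem_spectrum_of_mulVec_eq_smul {K n : Type*} [Field K] [Fintype n] [DecidableEq n]
    {A : Matrix n n K} {μ : K} {v : n → K} (hv : v ≠ 0) (hAv : A *ᵥ v = μ • v) :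
    μ ∈ spectrum K A := by
  rw [← spectrum_toLin']
  exact (Module.End.hasEigenvalue_of_hasEigenvector
    ⟨Module.End.mem_eigenspace_iff.mpr (by simpa using hAv), hv⟩).mem_spectrum

lemma Matrix.IsHermitian.exists_eigenvalues_eq_of_mulVec_eq_smul {𝕜 n : Type*} [RCLike 𝕜]
    [Fintype n] [DecidableEq n] {A : Matrix n n 𝕜} (hA : A.IsHermitian) {μ : ℝ} {v : n → 𝕜}
    (hv : v ≠ 0) (hAv : A *ᵥ v = (μ : 𝕜) • v) : ∃ k, hA.eigenvalues k = μ := by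
  have : μ ∈ spectrum ℝ A := spectrum.of_algebraMap_mem 𝕜 (mem_spectrum_of_mulVec_eq_smul hv hAv)
  rwa [hA.spectrum_real_eq_range_eigenvalues] at this

lemma Matrix.IsHermitian.eigenvectorBasis_ne_zero {𝕜 n : Type*} [RCLike 𝕜]
    [Fintype n] [DecidableEq n] {A : Matrix n n 𝕜} (hA : A.IsHermitian) (k : n) :
    ⇑(hA.eigenvectorBasis k) ≠ 0 := by
  simpa using hA.eigenvectorBasis.orthonormal.ne_zero k

namespace SecularEquation

variable {ι : Type*}

noncomputable def sqrtVec (p : ι → ℝ) : ι → ℂ := fun i => (Real.sqrt (p i) : ℂ)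

lemma sqrtVec_mul_self {p : ι → ℝ} {i : ι} (hp : 0 ≤ p i) : sqrtVec p i * sqrtVec p i = p i := by
  rw [sqrtVec, ← Complex.ofReal_mul, Real.mul_self_sqrt hp]

variable [Fintype ι]

noncomputable def secularSum (p : ι → ℝ) (x : ℝ) : ℝ := ∑ i, p i / (x + p i)

noncomputable def outerSubDiagonal [DecidableEq ι] (p : ι → ℝ) : Matrix ι ι ℂ :=
  vecMulVec (sqrtVec p) (sqrtVec p) - diagonal (fun i => (p i : ℂ))

lemma outerSubDiagonal_mulVec_apply [DecidableEq ι] (p : ι → ℝ) (v : ι → ℂ) (i : ι) :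
    (outerSubDiagonal p *ᵥ v) i = sqrtVec p i * (sqrtVec p ⬝ᵥ v) - p i * v i := by
  simp only [outerSubDiagonal, sub_mulVec, vecMulVec_mulVec, Pi.sub_apply, mulVec_diagonal,
    Pi.smul_apply, MulOpposite.smul_eq_mul_unop, MulOpposite.unop_op]

lemma secularSum_strictAntiOn {p : ι → ℝ} (hp : ∀ i, 0 ≤ p i) (hpos : ∃ i, 0 < p i) :
    StrictAntiOn (secularSum p) (Set.Ici 0) := by
  intro x hx y _ hxy
  obtain ⟨i₀, hi₀⟩ := hpos
  refine Finset.sum_lt_sum (fun i _ => ?_) ⟨i₀, Finset.mem_univ _, ?_⟩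
  · rcases (hp i).eq_or_lt with hi | hi
    · simp [← hi]
    · exact div_le_div_of_nonneg_left (hp i) (by grind) (by linarith)
  · exact div_lt_div_of_pos_left hi₀ (by grind) (by linarith)

variable [DecidableEq ι]

lemma secularSum_eq_one_of_mulVec_eq_smul {p : ι → ℝ} (hp : ∀ i, 0 ≤ p i) {μ : ℝ}
    (hμ : ∀ i, 0 < μ + p i) {v : ι → ℂ} (hv : v ≠ 0)
    (hμv : outerSubDiagonal p *ᵥ v = (μ : ℂ) • v) : secularSum p μ = 1 := by
  set s := sqrtVec p ⬝ᵥ v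
  have hne : ∀ i, (μ : ℂ) + p i ≠ 0 := fun i => by exact_mod_cast (hμ i).ne'
  have hvi : ∀ i, v i = sqrtVec p i * s / (μ + p i) := fun i => by
    have h := congrFun hμv i
    rw [outerSubDiagonal_mulVec_apply, Pi.smul_apply, smul_eq_mul] at h
    rw [eq_div_iff (hne i)]
    linear_combination -h
  have hs : s ≠ 0 := fun hs => hv <| funext fun i => by simp [hvi i, hs]
  have : (secularSum p μ : ℂ) * s = s := calc
    (secularSum p μ : ℂ) * s = ∑ i, sqrtVec p i * v i := by
      simp only [secularSum, Complex.ofReal_sum, Complex.ofReal_div, Complex.ofReal_add,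
        Finset.sum_mul]
      refine Finset.sum_congr rfl fun i _ => ?_
      rw [hvi i, ← mul_div_assoc, ← mul_assoc, sqrtVec_mul_self (hp i), div_mul_eq_mul_div]
    _ = s := rfl
  exact_mod_cast mul_eq_right₀ hs |>.mp this

lemma mulVec_eq_smul_of_secularSum_eq_one {p : ι → ℝ} (hp : ∀ i, 0 ≤ p i) {c : ℝ} (hc0 : 0 ≤ c)
    (hc : secularSum p c = 1) :
    ∃ w ≠ 0, outerSubDiagonal p *ᵥ w = (c : ℂ) • w := by
  set w : ι → ℂ := fun i => sqrtVec p i / (c + p i)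
  have hw : sqrtVec p ⬝ᵥ w = 1 := by
    have : sqrtVec p ⬝ᵥ w = (secularSum p c : ℂ) := by
      simp only [dotProduct, w, secularSum, Complex.ofReal_sum, Complex.ofReal_div,
        Complex.ofReal_add, ← mul_div_assoc, sqrtVec_mul_self (hp _)]
    rw [this, hc, Complex.ofReal_one]
  refine ⟨w, fun h => by simp [h] at hw, funext fun i => ?_⟩
  rw [outerSubDiagonal_mulVec_apply, hw, Pi.smul_apply, smul_eq_mul]
  rcases (hp i).eq_or_lt with hi | hi
  · simp [w, sqrtVec, ← hi]
  · have : (c : ℂ) + p i ≠ 0 := by exact_mod_cast (by positivity : c + p i ≠ 0)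
    simp only [w]
    field_simp
    ring

lemma eigenvalues_le_of_secularSum_eq_one {p : ι → ℝ} (hp : ∀ i, 0 ≤ p i) (hpos : ∃ i, 0 < p i)
    {c : ℝ} (hc0 : 0 ≤ c) (hc : secularSum p c = 1) (hA : (outerSubDiagonal p).IsHermitian)
    (k : ι) : hA.eigenvalues k ≤ c := by
  by_contra! hck
  have hk : outerSubDiagonal p *ᵥ ⇑(hA.eigenvectorBasis k) =
      (hA.eigenvalues k : ℂ) • ⇑(hA.eigenvectorBasis k) := by
    rw [hA.mulVec_eigenvectorBasis, RCLike.real_smul_eq_coe_smul (K := ℂ)]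
    rfl
  have := secularSum_eq_one_of_mulVec_eq_smul hp (fun i => by linarith [hp i])
    (hA.eigenvectorBasis_ne_zero k) hk
  exact (secularSum_strictAntiOn hp hpos hc0 (hc0.trans hck.le) hck).ne (this.trans hc.symm)

end SecularEquation

open SecularEquation

theorem largest_eigenvalue_eq_c_general {d : ℕ}
    (p : Fin d → ℝ) (hp0 : ∀ i, 0 ≤ p i)
    (c : ℝ) (hc0 : 0 ≤ c) (hc : ∑ i, p i / (c + p i) = 1)
    (M : Matrix (Fin d) (Fin d) ℂ)
    (hM : M = Matrix.vecMulVec (fun i => (Real.sqrt (p i) : ℂ))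
                (fun i => (Real.sqrt (p i) : ℂ)) -
              Matrix.diagonal (fun i => (p i : ℂ)))
    (hHerm : M.IsHermitian) :
    (⨆ i, hHerm.eigenvalues i) = c := by
  change M = outerSubDiagonal p at hM
  subst hM
  have hpos : ∃ i, 0 < p i := by
    obtain ⟨i, -, hi⟩ := Finset.exists_ne_zero_of_sum_ne_zero (hc ▸ one_ne_zero)
    exact ⟨i, (hp0 i).lt_of_ne' fun h => by simp [h] at hi⟩
  obtain ⟨w, hw, hcw⟩ := mulVec_eq_smul_of_secularSum_eq_one hp0 hc0 hc
  obtain ⟨k, hk⟩ := hHerm.exists_eigenvalues_eq_of_mulVec_eq_smul hw hcw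
  have : Nonempty (Fin d) := ⟨k⟩
  exact le_antisymm (ciSup_le (eigenvalues_le_of_secularSum_eq_one hp0 hpos hc0 hc hHerm))
    (hk ▸ le_ciSup (Set.finite_range _).bddAbove k)

/-- for `|p⟩ = Σᵢ √pᵢ |i⟩`, the largest eigenvalue of
`|p⟩⟨p| − Σᵢ pᵢ|i⟩⟨i|` equals the unique nonnegative `c` with `Σᵢ pᵢ/(c + pᵢ) = 1`. -/
theorem largest_eigenvalue_eq_c {d : ℕ}
    (p : Fin d → ℝ) (hp0 : ∀ i, 0 ≤ p i) (hp1 : ∑ i, p i = 1)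
    (c : ℝ) (hc0 : 0 ≤ c) (hc : ∑ i, p i / (c + p i) = 1)
    (M : Matrix (Fin d) (Fin d) ℂ)
    (hM : M = Matrix.vecMulVec (fun i => (Real.sqrt (p i) : ℂ))
                (fun i => (Real.sqrt (p i) : ℂ)) -
              Matrix.diagonal (fun i => (p i : ℂ)))
    (hHerm : M.IsHermitian) :
    (⨆ i, hHerm.eigenvalues i) = c :=
  largest_eigenvalue_eq_c_general p hp0 c hc0 hc M hM hHerm
end

section
/- Let E solve Σᵢ pᵢ/(E + pᵢ) = 1 where {pᵢ} is a probability distribution with largest entry p₁ and second-largest entry p₂, having R nonzero entries (R ≥ 2). Then 1 − p₁ ≤ ½(1 − p₁ − p₂ + √(−3p₁² + (1−p₂)² + 2p₁(1+p₂))) ≤ E ≤ ½(1 − p₁ + √(1 + 2p₁ − 3p₁²)). -/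
open BigOperators

lemma key_bounds (a b E : ℝ) (hb : 0 < b) (hba : b ≤ a) (hab1 : a + b ≤ 1)
    (hE : 0 < E)
    (hg : (1 - a - b) * E + a * (1 - a) ≤ E ^ 2)
    (hh : E ^ 2 ≤ (1 - a) * E + a * (1 - a)) :
    1 - a ≤ (1 - a - b + Real.sqrt (-3*a^2 + (1-b)^2 + 2*a*(1+b)))/2 ∧
    (1 - a - b + Real.sqrt (-3*a^2 + (1-b)^2 + 2*a*(1+b)))/2 ≤ E ∧
    E ≤ (1 - a + Real.sqrt (1 + 2*a - 3*a^2))/2 := by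
  have ha : 0 < a := lt_of_lt_of_le hb hba
  have ha1 : a < 1 := by linarith
  have hDnn : (0:ℝ) ≤ -3*a^2 + (1-b)^2 + 2*a*(1+b) := by nlinarith [sq_nonneg (1-a-b)]
  have hTnn : (0:ℝ) ≤ 1 + 2*a - 3*a^2 := by nlinarith
  set s := Real.sqrt (-3*a^2 + (1-b)^2 + 2*a*(1+b)) with hs
  set t := Real.sqrt (1 + 2*a - 3*a^2) with ht
  have hs0 : 0 ≤ s := Real.sqrt_nonneg _
  have ht0 : 0 ≤ t := Real.sqrt_nonneg _
  have hs2 : s^2 = -3*a^2 + (1-b)^2 + 2*a*(1+b) := Real.sq_sqrt hDnn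
  have ht2 : t^2 = 1 + 2*a - 3*a^2 := Real.sq_sqrt hTnn
  have hc : 1 - a - b < 2*E := by
    by_contra h
    push_neg at h
    nlinarith [mul_nonneg (by linarith : (0:ℝ) ≤ 1-a-b-2*E) hE.le]
  have h2 : s ≤ 2*E - (1-a-b) := by
    have h' : s ≤ Real.sqrt ((2*E - (1-a-b))^2) := Real.sqrt_le_sqrt (by nlinarith)
    rwa [Real.sqrt_sq (by linarith)] at h'
  refine ⟨?_, by linarith, ?_⟩
  · have h1 : 1 - a + b ≤ s := by
      have h' : Real.sqrt ((1-a+b)^2) ≤ s :=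
        Real.sqrt_le_sqrt (by nlinarith [mul_nonneg (sub_nonneg.2 hba) (by linarith : (0:ℝ) ≤ 1-a)])
      rwa [Real.sqrt_sq (by linarith)] at h'
    linarith
  · have h3 : 2*E - (1-a) ≤ t := by
      rcases le_or_gt (2*E) (1-a) with h | h
      · linarith
      · have h' : Real.sqrt ((2*E - (1-a))^2) ≤ t := Real.sqrt_le_sqrt (by nlinarith)
        rwa [Real.sqrt_sq (by linarith)] at h'
    linarith

/-- bounds on the entanglement of disturbance `E`, the unique nonnegative
solution of `Σᵢ pᵢ/(E + pᵢ) = 1`, in terms of the largest entry `p₁` and second-largest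
entry `p₂` of a decreasingly-sorted probability distribution with `R ≥ 2` nonzero entries:
`1 − p₁ ≤ ½(1 − p₁ − p₂ + √(−3p₁² + (1−p₂)² + 2p₁(1+p₂))) ≤ E ≤ ½(1 − p₁ + √(1 + 2p₁ − 3p₁²))`. -/
theorem entanglement_of_disturbance_bounds {n : ℕ} (hn : 2 ≤ n)
    (p : Fin n → ℝ)
    (hsort : ∀ i j : Fin n, i ≤ j → p j ≤ p i)
    (hp0 : ∀ i, 0 ≤ p i) (hp1 : ∑ i, p i = 1)
    (R : ℕ) (hR : 2 ≤ R)
    (hcard : (Finset.univ.filter (fun i => p i ≠ 0)).card = R)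
    (E : ℝ) (hE0 : 0 ≤ E) (hE : ∑ i, p i / (E + p i) = 1) :
    1 - p ⟨0, by omega⟩ ≤
      (1 - p ⟨0, by omega⟩ - p ⟨1, by omega⟩ +
        Real.sqrt (-3 * (p ⟨0, by omega⟩)^2 + (1 - p ⟨1, by omega⟩)^2 +
          2 * p ⟨0, by omega⟩ * (1 + p ⟨1, by omega⟩))) / 2 ∧
    (1 - p ⟨0, by omega⟩ - p ⟨1, by omega⟩ +
        Real.sqrt (-3 * (p ⟨0, by omega⟩)^2 + (1 - p ⟨1, by omega⟩)^2 +
          2 * p ⟨0, by omega⟩ * (1 + p ⟨1, by omega⟩))) / 2 ≤ E ∧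
    E ≤ (1 - p ⟨0, by omega⟩ +
        Real.sqrt (1 + 2 * p ⟨0, by omega⟩ - 3 * (p ⟨0, by omega⟩)^2)) / 2 := by
  have hn0 : 0 < n := by omega
  have hn1 : 1 < n := by omega
  have hne : (⟨0, hn0⟩ : Fin n) ≠ ⟨1, hn1⟩ := by simp [Fin.ext_iff]
  -- p ⟨1⟩ > 0
  have hb : 0 < p ⟨1, hn1⟩ := by
    rcases (hp0 ⟨1, hn1⟩).lt_or_eq with h | h
    · exact h
    · exfalso
      have hsub : (Finset.univ.filter (fun i => p i ≠ 0)) ⊆ {(⟨0, hn0⟩ : Fin n)} := by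
        intro i hi
        simp only [Finset.mem_filter, Finset.mem_univ, true_and] at hi
        simp only [Finset.mem_singleton]
        by_contra hii
        have h1le : (⟨1, hn1⟩ : Fin n) ≤ i := by
          rw [Fin.le_def]
          show 1 ≤ i.val
          have : i.val ≠ 0 := fun h0 => hii (Fin.ext h0)
          omega
        exact hi (le_antisymm (le_of_le_of_eq (hsort ⟨1, hn1⟩ i h1le) h.symm) (hp0 i))
      have := Finset.card_le_card hsub
      rw [hcard, Finset.card_singleton] at this
      omega
  have hba : p ⟨1, hn1⟩ ≤ p ⟨0, hn0⟩ := hsort _ _ (by rw [Fin.le_def]; norm_num)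
  have ha : 0 < p ⟨0, hn0⟩ := lt_of_lt_of_le hb hba
  have hab1 : p ⟨0, hn0⟩ + p ⟨1, hn1⟩ ≤ 1 := by
    have hsub : ({⟨0, hn0⟩, ⟨1, hn1⟩} : Finset (Fin n)) ⊆ Finset.univ := Finset.subset_univ _
    have hle := Finset.sum_le_sum_of_subset_of_nonneg hsub (fun i _ _ => hp0 i)
    rw [Finset.sum_pair hne, hp1] at hle
    exact hle
  have hEpos : 0 < E := by
    rcases hE0.lt_or_eq with h | h
    · exact h
    · exfalso
      rw [← h] at hE
      have heq : ∀ i : Fin n, p i / (0 + p i) = if p i ≠ 0 then (1:ℝ) else 0 := by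
        intro i
        by_cases hpi : p i = 0 <;> simp [hpi, div_self]
      rw [Finset.sum_congr rfl (fun i _ => heq i), Finset.sum_boole, hcard] at hE
      have h2 : (2:ℝ) ≤ (R:ℝ) := by exact_mod_cast hR
      rw [hE] at h2
      norm_num at h2
  have hEa : 0 < E + p ⟨0, hn0⟩ := by linarith
  have hEb : 0 < E + p ⟨1, hn1⟩ := by linarith
  have hsum : (1:ℝ) = p ⟨0, hn0⟩ / (E + p ⟨0, hn0⟩) +
      ∑ i ∈ Finset.univ.erase ⟨0, hn0⟩, p i / (E + p i) := by
    rw [← hE]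
    exact (Finset.add_sum_erase _ (fun i => p i / (E + p i)) (Finset.mem_univ ⟨0, hn0⟩)).symm
  have hrest : ∑ i ∈ Finset.univ.erase ⟨0, hn0⟩, p i = 1 - p ⟨0, hn0⟩ := by
    have h := (Finset.add_sum_erase _ p (Finset.mem_univ (⟨0, hn0⟩ : Fin n))).symm
    rw [hp1] at h
    linarith
  have hmem_le : ∀ i ∈ Finset.univ.erase (⟨0, hn0⟩ : Fin n), p i ≤ p ⟨1, hn1⟩ := by
    intro i hi
    have hii : i ≠ ⟨0, hn0⟩ := (Finset.mem_erase.1 hi).1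
    refine hsort ⟨1, hn1⟩ i ?_
    rw [Fin.le_def]
    show 1 ≤ i.val
    have : i.val ≠ 0 := fun h0 => hii (Fin.ext h0)
    omega
  have hg' : p ⟨0, hn0⟩ / (E + p ⟨0, hn0⟩) + (1 - p ⟨0, hn0⟩) / (E + p ⟨1, hn1⟩) ≤ 1 := by
    have hstep : (1 - p ⟨0, hn0⟩) / (E + p ⟨1, hn1⟩) ≤
        ∑ i ∈ Finset.univ.erase ⟨0, hn0⟩, p i / (E + p i) := by
      rw [← hrest, Finset.sum_div]
      refine Finset.sum_le_sum fun i hi => ?_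
      have h1 := hmem_le i hi
      have h2 := hp0 i
      gcongr <;> linarith
    linarith
  have hh' : 1 ≤ p ⟨0, hn0⟩ / (E + p ⟨0, hn0⟩) + (1 - p ⟨0, hn0⟩) / E := by
    have hstep : ∑ i ∈ Finset.univ.erase ⟨0, hn0⟩, p i / (E + p i) ≤
        (1 - p ⟨0, hn0⟩) / E := by
      rw [← hrest, Finset.sum_div]
      refine Finset.sum_le_sum fun i hi => ?_
      have h2 := hp0 i
      gcongr
      linarith
    linarith
  have hg : (1 - p ⟨0, hn0⟩ - p ⟨1, hn1⟩) * E + p ⟨0, hn0⟩ * (1 - p ⟨0, hn0⟩) ≤ E ^ 2 := by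
    rw [div_add_div _ _ (ne_of_gt hEa) (ne_of_gt hEb), div_le_one (mul_pos hEa hEb)] at hg'
    nlinarith [hg']
  have hh : E ^ 2 ≤ (1 - p ⟨0, hn0⟩) * E + p ⟨0, hn0⟩ * (1 - p ⟨0, hn0⟩) := by
    rw [div_add_div _ _ (ne_of_gt hEa) (ne_of_gt hEpos), le_div_iff₀ (mul_pos hEa hEpos)] at hh'
    nlinarith [hh']
  have key := key_bounds (p ⟨0, hn0⟩) (p ⟨1, hn1⟩) E hb hba hab1 hEpos hg hh
  refine ⟨?_, ?_, ?_⟩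
  · exact key.1
  · exact key.2.1
  · exact key.2.2
end

section
/- For an ensemble of two qubit states {(p, ρ⁽¹⁾), (1−p, ρ⁽²⁾)} with Bloch vectors r⃗₁, r⃗₂, the minimum over projective measurement directions v̂ of ½[p‖r⃗₁‖|sin ∠(v̂,r⃗₁)| + (1−p)‖r⃗₂‖|sin ∠(v̂,r⃗₂)|] equals ½ |sin ∠(r⃗₁, r⃗₂)| · min{p‖r⃗₁‖, (1−p)‖r⃗₂‖}. -/
/-!
The sine of the angle between vectors obeys a triangle inequality,
`sin ∠(x, y) ≤ sin ∠(v, x) + sin ∠(v, y)` for every `v`: after replacing `v` by `-v` we may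
assume `∠(v, y) ≤ π / 2`, and then `|∠(x, y) - ∠(v, x)| ≤ ∠(v, y)` by the triangle inequality
for angles, so `sin ∠(x, y) = sin (∠(v, x) + (∠(x, y) - ∠(v, x)))` is at most
`sin ∠(v, x) + sin ∠(v, y)`. Multiplying by the smaller weight gives the lower bound, and it is
attained by `v` pointing along the vector of larger weight.
-/

open InnerProductGeometry Real

theorem Real.sin_le_sin_add_sin_of_abs_sub_le {a b c : ℝ} (ha : 0 ≤ sin a) (hb : b ≤ π / 2)
    (hc : |c - a| ≤ b) : sin c ≤ sin a + sin b := by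
  obtain ⟨hlo, hhi⟩ := abs_le.1 hc
  have hsin : |sin (c - a)| ≤ sin b := abs_le.2
    ⟨by rw [← sin_neg]; exact sin_le_sin_of_le_of_le_pi_div_two (by linarith) (by linarith) hlo,
     sin_le_sin_of_le_of_le_pi_div_two (by linarith) hb hhi⟩
  have hcos : cos a * sin (c - a) ≤ |sin (c - a)| := (le_abs_self _).trans <| by
    rw [abs_mul]; exact mul_le_of_le_one_left (abs_nonneg _) (abs_cos_le_one a)
  calc sin c = sin a * cos (c - a) + cos a * sin (c - a) := by rw [← sin_add, add_sub_cancel]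
    _ ≤ sin a + sin b := by linarith [mul_le_of_le_one_right ha (cos_le_one (c - a))]

variable {E : Type*} [NormedAddCommGroup E] [InnerProductSpace ℝ E]

namespace InnerProductGeometry

theorem sin_angle_le_sin_angle_add_sin_angle_of_angle_le (v x y : E)
    (hv : angle v y ≤ π / 2) :
    sin (angle x y) ≤ sin (angle v x) + sin (angle v y) := by
  refine sin_le_sin_add_sin_of_abs_sub_le (sin_angle_nonneg v x) hv (abs_sub_le_iff.2 ⟨?_, ?_⟩)
  · linarith [angle_le_angle_add_angle x v y, angle_comm x v]
  · linarith [angle_le_angle_add_angle v y x, angle_comm x y]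

theorem sin_angle_le_sin_angle_add_sin_angle (v x y : E) :
    sin (angle x y) ≤ sin (angle v x) + sin (angle v y) := by
  rcases le_total (angle v y) (π / 2) with hv | hv
  · exact sin_angle_le_sin_angle_add_sin_angle_of_angle_le v x y hv
  · have := sin_angle_le_sin_angle_add_sin_angle_of_angle_le (-v) x y
      (by rw [angle_neg_left]; linarith)
    simpa only [angle_neg_left, sin_pi_sub] using this

theorem min_mul_sin_angle_le {a b : ℝ} (ha : 0 ≤ a) (hb : 0 ≤ b) (v x y : E) :
    min a b * sin (angle x y) ≤ a * sin (angle v x) + b * sin (angle v y) :=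
  calc min a b * sin (angle x y) ≤ min a b * (sin (angle v x) + sin (angle v y)) :=
        mul_le_mul_of_nonneg_left (sin_angle_le_sin_angle_add_sin_angle v x y) (le_min ha hb)
    _ ≤ a * sin (angle v x) + b * sin (angle v y) := by
        rw [mul_add]
        exact add_le_add (mul_le_mul_of_nonneg_right (min_le_left a b) (sin_angle_nonneg v x))
          (mul_le_mul_of_nonneg_right (min_le_right a b) (sin_angle_nonneg v y))

theorem exists_norm_eq_one_mul_sin_angle_eq_min_of_le [Nontrivial E] {s t : ℝ} (hs : 0 ≤ s)
    {x y : E} (hle : s * ‖x‖ ≤ t * ‖y‖) :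
    ∃ v : E, ‖v‖ = 1 ∧ s * ‖x‖ * sin (angle v x) + t * ‖y‖ * sin (angle v y) =
      min (s * ‖x‖) (t * ‖y‖) * sin (angle x y) := by
  rw [min_eq_left hle]
  rcases eq_or_ne y 0 with rfl | hy
  · have hx : s * ‖x‖ = 0 := le_antisymm (by simpa using hle) (by positivity)
    obtain ⟨v, hv⟩ := exists_norm_eq E zero_le_one
    exact ⟨v, hv, by simp [hx]⟩
  · refine ⟨NormedSpace.normalize y, NormedSpace.norm_normalize_eq_one_iff.2 hy, ?_⟩
    simp [angle_normalize_left, angle_self hy, angle_comm y x]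

theorem exists_norm_eq_one_mul_sin_angle_eq_min [Nontrivial E] {s t : ℝ} (hs : 0 ≤ s)
    (ht : 0 ≤ t) (x y : E) :
    ∃ v : E, ‖v‖ = 1 ∧ s * ‖x‖ * sin (angle v x) + t * ‖y‖ * sin (angle v y) =
      min (s * ‖x‖) (t * ‖y‖) * sin (angle x y) := by
  rcases le_total (s * ‖x‖) (t * ‖y‖) with hle | hle
  · exact exists_norm_eq_one_mul_sin_angle_eq_min_of_le hs hle
  · obtain ⟨v, hv, h⟩ := exists_norm_eq_one_mul_sin_angle_eq_min_of_le ht hle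
    exact ⟨v, hv, by rw [add_comm, h, min_comm, angle_comm]⟩

end InnerProductGeometry

theorem two_qubit_ensemble_quantumness_general (p : ℝ) (hp : p ∈ Set.Icc (0 : ℝ) 1)
    (r₁ r₂ : EuclideanSpace ℝ (Fin 3)) :
    IsLeast
      {x : ℝ | ∃ v : EuclideanSpace ℝ (Fin 3), ‖v‖ = 1 ∧
        x = (1 / 2) * (p * ‖r₁‖ * |Real.sin (InnerProductGeometry.angle v r₁)| +
             (1 - p) * ‖r₂‖ * |Real.sin (InnerProductGeometry.angle v r₂)|)}
      ((1 / 2) * |Real.sin (InnerProductGeometry.angle r₁ r₂)| *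
        min (p * ‖r₁‖) ((1 - p) * ‖r₂‖)) := by
  obtain ⟨hp₀, hp₁⟩ := hp
  simp only [abs_of_nonneg (sin_angle_nonneg _ _)]
  constructor
  · obtain ⟨v, hv, h⟩ := exists_norm_eq_one_mul_sin_angle_eq_min hp₀ (sub_nonneg.2 hp₁) r₁ r₂
    exact ⟨v, hv, by rw [h]; ring⟩
  · rintro _ ⟨v, -, rfl⟩
    have := min_mul_sin_angle_le (mul_nonneg hp₀ (norm_nonneg r₁))
      (mul_nonneg (sub_nonneg.2 hp₁) (norm_nonneg r₂)) v r₁ r₂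
    linarith

/-- for an ensemble of two qubit states with Bloch vectors `r⃗₁, r⃗₂` and
probabilities `p, 1−p`, the minimum over measurement directions `v̂` of
`½[p‖r⃗₁‖|sin ∠(v̂,r⃗₁)| + (1−p)‖r⃗₂‖|sin ∠(v̂,r⃗₂)|]` equals
`½ |sin ∠(r⃗₁,r⃗₂)| · min{p‖r⃗₁‖, (1−p)‖r⃗₂‖}`. -/
theorem two_qubit_ensemble_quantumness (p : ℝ) (hp : p ∈ Set.Icc (0 : ℝ) 1)
    (r₁ r₂ : EuclideanSpace ℝ (Fin 3)) (h1 : ‖r₁‖ ≤ 1) (h2 : ‖r₂‖ ≤ 1) :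
    IsLeast
      {x : ℝ | ∃ v : EuclideanSpace ℝ (Fin 3), ‖v‖ = 1 ∧
        x = (1 / 2) * (p * ‖r₁‖ * |Real.sin (InnerProductGeometry.angle v r₁)| +
             (1 - p) * ‖r₂‖ * |Real.sin (InnerProductGeometry.angle v r₂)|)}
      ((1 / 2) * |Real.sin (InnerProductGeometry.angle r₁ r₂)| *
        min (p * ‖r₁‖) ((1 - p) * ‖r₂‖)) :=
  two_qubit_ensemble_quantumness_general p hp r₁ r₂
end
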